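/- arXiv:math/0608368 — 2 statements merged into one kernel-verified Lean document; each statement's English description precedes it below -/
import Mathlib

section
/- Let A be a 2n×2n real matrix with A² = −I. Then the skew-symmetric part A₁ = (A − Aᵗ)/2 is an invertible matrix. -/
open Matrix

/-! If `A * A = -1` and `A *ᵥ v = Aᵀ *ᵥ v`, then moving `A` across the dot product gives
`‖A v‖² = ⟪Aᵀ v, A v⟫ = ⟪v, A (A v)⟫ = -‖v‖²`, so `v = 0`. Hence `A - Aᵀ` has trivial kernel. -/

namespace Matrix

variable {ι K : Type*} [Fintype ι] [DecidableEq ι]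

theorem eq_zero_of_mulVec_eq_transpose_mulVec [CommRing K] [LinearOrder K]
    [IsStrictOrderedRing K] {A : Matrix ι ι K} (hA : A * A = -1) {v : ι → K}
    (hv : A *ᵥ v = Aᵀ *ᵥ v) : v = 0 := by
  have hsum : v ⬝ᵥ v + A *ᵥ v ⬝ᵥ A *ᵥ v = 0 := by
    calc v ⬝ᵥ v + A *ᵥ v ⬝ᵥ A *ᵥ v
        = v ⬝ᵥ v + Aᵀ *ᵥ v ⬝ᵥ A *ᵥ v := by rw [← hv]
      _ = v ⬝ᵥ v + v ⬝ᵥ (A * A) *ᵥ v := by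
          rw [mulVec_transpose, ← dotProduct_mulVec, mulVec_mulVec]
      _ = 0 := by rw [hA, neg_mulVec, one_mulVec, dotProduct_neg, add_neg_cancel]
  have hnonneg (w : ι → K) : 0 ≤ w ⬝ᵥ w := Finset.sum_nonneg fun i _ => mul_self_nonneg (w i)
  exact dotProduct_self_eq_zero.mp ((add_eq_zero_iff_of_nonneg (hnonneg _) (hnonneg _)).mp hsum).1

theorem isUnit_sub_transpose_of_mul_self_eq_neg_one [Field K] [LinearOrder K]
    [IsStrictOrderedRing K] {A : Matrix ι ι K} (hA : A * A = -1) : IsUnit (A - Aᵀ) := by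
  rw [← mulVec_injective_iff_isUnit, ← coe_mulVecLin, injective_iff_map_eq_zero]
  intro v hv
  rw [coe_mulVecLin, sub_mulVec, sub_eq_zero] at hv
  exact eq_zero_of_mulVec_eq_transpose_mulVec hA hv

end Matrix

/-- Let `A` be a `2n×2n` real matrix with `A² = -I`.  Then its skew-symmetric
part `A₁ = (A - Aᵗ)/2` is an invertible matrix. -/
theorem skew_part_invertible (n : ℕ)
    (A : Matrix (Fin (2 * n)) (Fin (2 * n)) ℝ) (hA : A * A = -1) :
    IsUnit ((1 / 2 : ℝ) • (A - Aᵀ)) :=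
  (isUnit_sub_transpose_of_mul_self_eq_neg_one hA).smul (Units.mk0 (1 / 2 : ℝ) (by norm_num))
end

section
/- Let e₁, …, e_{2n} be an orthonormal basis of ℝ^{2n}, let λ₁, …, λₙ be real numbers, and let t be a real number. Define A(t) = Σ_{i=1}^{n} √(1 + t²λᵢ²) · ( e_{n+i} eᵢᵗ − eᵢ e_{n+i}ᵗ ) + Σ_{i=1}^{n} t λᵢ · ( eᵢ eᵢᵗ − e_{n+i} e_{n+i}ᵗ ). Then A(t)² = −I. (For t = 1 this is the normal form of an arbitrary complex structure on ℝ^{2n}, and the family A(t) realizes the deformation retraction of 𝒥(ℝ^{2n}) onto the orthogonal twistor space 𝒥̃(ℝ^{2n}).) -/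
/-!
In the orthonormal basis `e`, `A(t)` is the block matrix `J = [[diag c, -diag s], [diag s, -diag c]]`
with `cᵢ = tλᵢ` and `sᵢ = √(1 + t²λᵢ²)`; since `sᵢ² - cᵢ² = 1`, the blocks of `J²` are `-1` on the
diagonal and `0` off it. Conjugating by the orthogonal change of basis gives `A² = -1`.
-/

open Matrix

namespace Matrix

variable {ι m R : Type*}

theorem of_mul_transpose_eq_one [Fintype m] [DecidableEq ι] [CommRing R] {e : ι → m → R}
    (he : ∀ a b, e a ⬝ᵥ e b = if a = b then 1 else 0) : of e * (of e)ᵀ = 1 :=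
  ext fun a b => he a b

theorem transpose_mul_mul_mul_self_eq_neg_one [Fintype ι] [Fintype m] [DecidableEq ι]
    [DecidableEq m] [CommRing R] {E : Matrix ι m R} {B : Matrix ι ι R}
    (hE : E * Eᵀ = 1) (hcard : Fintype.card ι = Fintype.card m) (hB : B * B = -1) :
    (Eᵀ * B * E) * (Eᵀ * B * E) = -1 := by
  have hE' : Eᵀ * E = 1 := (mul_eq_one_comm_of_card_eq _ _ _ hcard).mp hE
  calc (Eᵀ * B * E) * (Eᵀ * B * E) = Eᵀ * B * (E * Eᵀ) * B * E := by simp only [Matrix.mul_assoc]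
    _ = Eᵀ * (B * B) * E := by rw [hE, Matrix.mul_one, Matrix.mul_assoc Eᵀ]
    _ = -1 := by rw [hB, Matrix.mul_neg, Matrix.mul_one, Matrix.neg_mul, hE']

theorem transpose_of_mul_diagonal_mul_of [Fintype ι] [DecidableEq ι] [CommSemiring R]
    (u v : ι → m → R) (d : ι → R) :
    (of u)ᵀ * diagonal d * of v = ∑ i, d i • vecMulVec (u i) (v i) := by
  ext j k
  simp [mul_apply, sum_apply, vecMulVec_apply, diagonal_apply, mul_comm, mul_left_comm]

theorem of_transpose_mul_fromBlocks_diagonal_mul_of [Fintype ι] [DecidableEq ι] [CommRing R]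
    (e : ι ⊕ ι → m → R) (s c : ι → R) :
    (of e)ᵀ * fromBlocks (diagonal c) (-diagonal s) (diagonal s) (-diagonal c) * of e =
      ∑ i, s i • (vecMulVec (e (.inr i)) (e (.inl i)) - vecMulVec (e (.inl i)) (e (.inr i))) +
      ∑ i, c i • (vecMulVec (e (.inl i)) (e (.inl i)) - vecMulVec (e (.inr i)) (e (.inr i))) := by
  have hsplit : of e = fromRows (of fun i => e (.inl i)) (of fun i => e (.inr i)) := by
    ext (i | i) j <;> rfl
  rw [hsplit, transpose_fromRows, fromCols_mul_fromBlocks, fromCols_mul_fromRows]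
  simp only [Matrix.add_mul, Matrix.mul_neg, Matrix.neg_mul, transpose_of_mul_diagonal_mul_of,
    smul_sub, Finset.sum_sub_distrib]
  abel

theorem fromBlocks_diagonal_mul_self_eq_neg_one [Fintype ι] [DecidableEq ι] [CommRing R]
    {s c : ι → R} (hsc : ∀ i, s i ^ 2 = 1 + c i ^ 2) :
    fromBlocks (diagonal c) (-diagonal s) (diagonal s) (-diagonal c) *
      fromBlocks (diagonal c) (-diagonal s) (diagonal s) (-diagonal c) = -1 := by
  rw [fromBlocks_multiply, ← fromBlocks_one, fromBlocks_neg, neg_zero, ← diagonal_one,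
    ← diagonal_zero, diagonal_neg]
  simp only [diagonal_neg, diagonal_mul_diagonal, diagonal_add]
  refine fromBlocks_inj.mpr ⟨?_, ?_, ?_, ?_⟩ <;> congr 1 <;> funext i
  · linear_combination -(hsc i)
  · ring
  · ring
  · linear_combination -(hsc i)

end Matrix

/-- Let `e₁, …, e_{2n}` be an orthonormal basis of `ℝ^{2n}` (here `e (.inl i)`
is `eᵢ` and `e (.inr i)` is `e_{n+i}`), let `λ₁, …, λₙ` and `t` be real numbers,
and set
`A(t) = ∑ᵢ √(1 + t²λᵢ²)·(e_{n+i}eᵢᵗ - eᵢe_{n+i}ᵗ) + ∑ᵢ tλᵢ·(eᵢeᵢᵗ - e_{n+i}e_{n+i}ᵗ)`.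
Then `A(t)² = -I`. -/
theorem deformation_is_complex_structure (n : ℕ)
    (e : Fin n ⊕ Fin n → Fin (2 * n) → ℝ)
    (he : ∀ a b, e a ⬝ᵥ e b = if a = b then 1 else 0)
    (lam : Fin n → ℝ) (t : ℝ)
    (A : Matrix (Fin (2 * n)) (Fin (2 * n)) ℝ)
    (hA : A =
      (∑ i : Fin n, Real.sqrt (1 + t ^ 2 * lam i ^ 2) •
        (Matrix.vecMulVec (e (.inr i)) (e (.inl i)) -
          Matrix.vecMulVec (e (.inl i)) (e (.inr i)))) +
      ∑ i : Fin n, (t * lam i) •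
        (Matrix.vecMulVec (e (.inl i)) (e (.inl i)) -
          Matrix.vecMulVec (e (.inr i)) (e (.inr i)))) :
    A * A = -1 := by
  have hsc : ∀ i, √(1 + t ^ 2 * lam i ^ 2) ^ 2 = 1 + (t * lam i) ^ 2 := fun i => by
    rw [Real.sq_sqrt (by positivity)]; ring
  rw [hA.trans (of_transpose_mul_fromBlocks_diagonal_mul_of e _ _).symm]
  exact transpose_mul_mul_mul_self_eq_neg_one (of_mul_transpose_eq_one he) (by simp [two_mul])
    (fromBlocks_diagonal_mul_self_eq_neg_one hsc)
end
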